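/- arXiv:2103.02390 — 2 statements merged into one kernel-verified Lean document; each statement's English description precedes it below -/
import Mathlib

section
/- Let (X,d,μ) be a doubling quasi-metric measure space with μ(X) = ∞ and γ > 0. There is C > 0 such that for any x₁ ∈ X and r, R > 0, ∫_{{x : d(x₁,x) ≥ R}} (1/(V_r(x₁)+V(x₁,x))) · (r/(r+d(x₁,x)))^γ dμ(x) ≤ C (r/(r+R))^γ', for any γ' ∈ (0,γ) with γ - γ' > ω. -/
open MeasureTheory ENNReal

/-!
Write `δ = γ - γ'`. On `{d(x₁,x) ≥ R}` the factor `(r/(r+d))^γ'` is at most `(r/(r+R))^γ'`, and the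
kernel is at most `V_r(x₁)⁻¹`, so it remains to bound `∫ V_r(x₁)⁻¹ (r/(r+d))^δ dμ` uniformly.
Split `X` into the ball `B(x₁,r)` and the dyadic annuli `2^k r ≤ d < 2^(k+1) r`. By doubling the
`k`-th annulus has measure at most `Cμ^(k+1) V_r(x₁)` while the integrand is at most
`V_r(x₁)⁻¹ 2^(-kδ)`, so the annuli contribute the geometric series `∑ Cμ (Cμ 2^(-δ))^k`,
which converges because `δ > log₂ Cμ`.
-/

lemma le_pow_mul_of_le_two_mul {V : ℝ → ℝ≥0∞} {c : ℝ≥0∞}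
    (hV : ∀ r, 0 < r → V (2 * r) ≤ c * V r) {r : ℝ} (hr : 0 < r) (k : ℕ) :
    V (2 ^ k * r) ≤ c ^ k * V r := by
  induction k with
  | zero => simp
  | succ k ih =>
    calc V (2 ^ (k + 1) * r) = V (2 * (2 ^ k * r)) := by ring_nf
      _ ≤ c * V (2 ^ k * r) := hV _ (by positivity)
      _ ≤ c * (c ^ k * V r) := by gcongr
      _ = c ^ (k + 1) * V r := by ring

lemma lt_or_exists_two_pow_mul_le_lt {r : ℝ} (hr : 0 < r) (a : ℝ) :
    a < r ∨ ∃ k : ℕ, 2 ^ k * r ≤ a ∧ a < 2 ^ (k + 1) * r := by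
  refine (lt_or_ge a r).imp_right fun har => ?_
  obtain ⟨k, hk, hk'⟩ := exists_nat_pow_near ((one_le_div hr).2 har) one_lt_two
  exact ⟨k, (le_div_iff₀ hr).1 hk, (div_lt_iff₀ hr).1 hk'⟩

lemma mul_two_rpow_neg_lt_one {C δ : ℝ} (hC : 0 < C) (h : Real.logb 2 C < δ) :
    C * 2 ^ (-δ) < 1 := by
  have hCδ : C < 2 ^ δ := (Real.logb_lt_iff_lt_rpow one_lt_two hC).1 h
  calc C * 2 ^ (-δ) < 2 ^ δ * 2 ^ (-δ) := by gcongr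
    _ = 1 := by rw [← Real.rpow_add two_pos, add_neg_cancel, Real.rpow_zero]

lemma div_add_rpow_le_one {r a δ : ℝ} (hr : 0 < r) (ha : 0 ≤ a) (hδ : 0 ≤ δ) :
    (r / (r + a)) ^ δ ≤ 1 :=
  Real.rpow_le_one (by positivity) ((div_le_one (by positivity)).2 (by linarith)) hδ

lemma div_add_rpow_le_two_rpow_neg {r a δ : ℝ} (hr : 0 < r) (hδ : 0 ≤ δ) {k : ℕ}
    (ha : 2 ^ k * r ≤ a) : (r / (r + a)) ^ δ ≤ (2 ^ (-δ)) ^ k := by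
  have ha0 : 0 < a := lt_of_lt_of_le (by positivity) ha
  have hle : r / (r + a) ≤ (2 ^ k)⁻¹ := by
    rw [div_le_iff₀ (by positivity)]
    calc r = (2 ^ k)⁻¹ * (2 ^ k * r) := by field_simp
      _ ≤ (2 ^ k)⁻¹ * (r + a) := by gcongr; linarith
  calc (r / (r + a)) ^ δ ≤ ((2 ^ k)⁻¹ : ℝ) ^ δ := by
        gcongr
    _ = (2 ^ (-δ)) ^ k := by
        rw [← Real.rpow_natCast, ← Real.rpow_natCast, Real.inv_rpow (by positivity),
          ← Real.rpow_mul zero_le_two, ← Real.rpow_mul zero_le_two, ← Real.rpow_neg zero_le_two,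
          mul_comm, neg_mul]

lemma div_add_rpow_le_mul_rpow_sub {r R a γ γ' : ℝ} (hr : 0 < r) (hR : 0 ≤ R) (hRa : R ≤ a)
    (hγ' : 0 ≤ γ') : (r / (r + a)) ^ γ ≤ (r / (r + R)) ^ γ' * (r / (r + a)) ^ (γ - γ') := by
  have hpos : 0 < r / (r + a) := div_pos hr (by linarith)
  calc (r / (r + a)) ^ γ = (r / (r + a)) ^ γ' * (r / (r + a)) ^ (γ - γ') := by
        rw [← Real.rpow_add hpos, add_sub_cancel]
    _ ≤ (r / (r + R)) ^ γ' * (r / (r + a)) ^ (γ - γ') := by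
        gcongr

lemma inv_add_mul_ofReal_div_add_rpow_le (a b : ℝ≥0∞) {r R t γ γ' : ℝ} (hr : 0 < r)
    (hR : 0 ≤ R) (hRt : R ≤ t) (hγ' : 0 ≤ γ') :
    (a + b)⁻¹ * ENNReal.ofReal ((r / (r + t)) ^ γ) ≤
      ENNReal.ofReal ((r / (r + R)) ^ γ') * (a⁻¹ * ENNReal.ofReal ((r / (r + t)) ^ (γ - γ'))) := by
  rw [mul_left_comm, ← ENNReal.ofReal_mul (by positivity)]
  gcongr
  · exact le_self_add
  · exact div_add_rpow_le_mul_rpow_sub hr hR hRt hγ'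

lemma setLIntegral_inv_mul_le {α : Type*} [MeasurableSpace α] {μ : Measure α} {s : Set α}
    (hs : MeasurableSet s) {f : α → ℝ≥0∞} {a b c : ℝ≥0∞} (hf : ∀ x ∈ s, f x ≤ a)
    (hμs : μ s ≤ b * c) : ∫⁻ x in s, c⁻¹ * f x ∂μ ≤ a * b :=
  calc ∫⁻ x in s, c⁻¹ * f x ∂μ ≤ ∫⁻ _ in s, c⁻¹ * a ∂μ :=
        setLIntegral_mono' hs fun x hx => by gcongr; exact hf x hx
    _ = c⁻¹ * a * μ s := setLIntegral_const _ _
    _ ≤ c⁻¹ * a * (b * c) := by gcongr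
    _ = (c⁻¹ * c) * (a * b) := by ring
    _ ≤ a * b := mul_le_of_le_one_left' (ENNReal.inv_mul_le_one c)

section Doubling

variable {X : Type*} [MeasurableSpace X] {d : X → X → ℝ} {μ : Measure X} {Cμ : ℝ}
  {x₁ : X} {r δ : ℝ}

lemma lintegral_ball_inv_measure_ball_mul_le (hd_nonneg : ∀ x y, 0 ≤ d x y)
    (hdm : Measurable (d x₁)) (hr : 0 < r) (hδ : 0 ≤ δ) :
    ∫⁻ x in {x | d x₁ x < r},
        (μ {z | d x₁ z < r})⁻¹ * ENNReal.ofReal ((r / (r + d x₁ x)) ^ δ) ∂μ ≤ 1 := by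
  refine (setLIntegral_inv_mul_le (hdm measurableSet_Iio) (a := 1) (b := 1) (fun x _ => ?_)
    (one_mul _).ge).trans_eq (one_mul 1)
  exact ENNReal.ofReal_le_one.2 (div_add_rpow_le_one hr (hd_nonneg x₁ x) hδ)

lemma lintegral_annulus_inv_measure_ball_mul_le (hCμ : 0 ≤ Cμ)
    (hdoub : ∀ r, 0 < r → μ {y | d x₁ y < 2 * r} ≤ ENNReal.ofReal Cμ * μ {y | d x₁ y < r})
    (hdm : Measurable (d x₁)) (hr : 0 < r) (hδ : 0 ≤ δ) (k : ℕ) :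
    ∫⁻ x in {x | 2 ^ k * r ≤ d x₁ x ∧ d x₁ x < 2 ^ (k + 1) * r},
        (μ {z | d x₁ z < r})⁻¹ * ENNReal.ofReal ((r / (r + d x₁ x)) ^ δ) ∂μ ≤
      ENNReal.ofReal (Cμ * (Cμ * 2 ^ (-δ)) ^ k) := by
  have hμ : μ {x | 2 ^ k * r ≤ d x₁ x ∧ d x₁ x < 2 ^ (k + 1) * r} ≤
      ENNReal.ofReal Cμ ^ (k + 1) * μ {z | d x₁ z < r} :=
    (measure_mono fun x hx => hx.2).trans
      (le_pow_mul_of_le_two_mul (V := fun ρ => μ {y | d x₁ y < ρ}) hdoub hr (k + 1))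
  refine (setLIntegral_inv_mul_le ((hdm measurableSet_Ici).inter (hdm measurableSet_Iio))
    (fun x hx => ENNReal.ofReal_le_ofReal (div_add_rpow_le_two_rpow_neg hr hδ hx.1)) hμ).trans_eq ?_
  rw [← ENNReal.ofReal_pow hCμ, ← ENNReal.ofReal_mul (by positivity)]
  congr 1
  ring

lemma lintegral_inv_measure_ball_mul_rpow_le (hd_nonneg : ∀ x y, 0 ≤ d x y) (hCμ : 0 ≤ Cμ)
    (hdoub : ∀ r, 0 < r → μ {y | d x₁ y < 2 * r} ≤ ENNReal.ofReal Cμ * μ {y | d x₁ y < r})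
    (hdm : Measurable (d x₁)) (hr : 0 < r) (hδ : 0 ≤ δ) (hs : Cμ * 2 ^ (-δ) < 1) :
    ∫⁻ x, (μ {z | d x₁ z < r})⁻¹ * ENNReal.ofReal ((r / (r + d x₁ x)) ^ δ) ∂μ ≤
      ENNReal.ofReal (1 + Cμ / (1 - Cμ * 2 ^ (-δ))) := by
  set s : ℝ := Cμ * 2 ^ (-δ)
  have hs0 : 0 ≤ s := by positivity
  set f : X → ℝ≥0∞ := fun x => (μ {z | d x₁ z < r})⁻¹ * ENNReal.ofReal ((r / (r + d x₁ x)) ^ δ)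
  have hcover : Set.univ ⊆ {x | d x₁ x < r} ∪
      ⋃ k : ℕ, {x | 2 ^ k * r ≤ d x₁ x ∧ d x₁ x < 2 ^ (k + 1) * r} := fun x _ => by
    simpa only [Set.mem_union, Set.mem_iUnion, Set.mem_ofPred_eq] using lt_or_exists_two_pow_mul_le_lt hr (d x₁ x)
  have hgeom : ∑' k : ℕ, ENNReal.ofReal (Cμ * s ^ k) = ENNReal.ofReal (Cμ / (1 - s)) := by
    rw [← ENNReal.ofReal_tsum_of_nonneg (fun k => by positivity)
      ((summable_geometric_of_lt_one hs0 hs).mul_left Cμ), tsum_mul_left,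
      tsum_geometric_of_lt_one hs0 hs, div_eq_mul_inv]
  calc ∫⁻ x, f x ∂μ = ∫⁻ x in Set.univ, f x ∂μ := by rw [Measure.restrict_univ]
    _ ≤ ∫⁻ x in {x | d x₁ x < r} ∪
          ⋃ k : ℕ, {x | 2 ^ k * r ≤ d x₁ x ∧ d x₁ x < 2 ^ (k + 1) * r}, f x ∂μ :=
        lintegral_mono' (Measure.restrict_mono hcover le_rfl) le_rfl
    _ ≤ (∫⁻ x in {x | d x₁ x < r}, f x ∂μ) +
          ∑' k : ℕ, ∫⁻ x in {x | 2 ^ k * r ≤ d x₁ x ∧ d x₁ x < 2 ^ (k + 1) * r}, f x ∂μ :=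
        (lintegral_union_le _ _ _).trans (add_le_add_right (lintegral_iUnion_le _ _) _)
    _ ≤ 1 + ∑' k : ℕ, ENNReal.ofReal (Cμ * s ^ k) := by
        gcongr with k
        · exact lintegral_ball_inv_measure_ball_mul_le hd_nonneg hdm hr hδ
        · exact lintegral_annulus_inv_measure_ball_mul_le hCμ hdoub hdm hr hδ k
    _ = ENNReal.ofReal (1 + Cμ / (1 - s)) := by
        rw [hgeom, ENNReal.ofReal_add zero_le_one (div_nonneg hCμ (by linarith)),
          ENNReal.ofReal_one]

end Doubling

theorem integral_tail_kernel_bound_general {X : Type*} [MeasurableSpace X]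
    (d : X → X → ℝ)
    (hd_nonneg : ∀ x y, 0 ≤ d x y)
    (hd_meas : Measurable fun p : X × X => d p.1 p.2)
    (μ : Measure X) (Cμ : ℝ) (hCμ : 1 ≤ Cμ)
    (hdoub : ∀ x r, 0 < r →
      μ {y | d x y < 2 * r} ≤ ENNReal.ofReal Cμ * μ {y | d x y < r})
    (γ : ℝ) :
    ∀ γ' : ℝ, 0 < γ' → γ' < γ → Real.logb 2 Cμ < γ - γ' →
      ∃ C : ℝ, 0 < C ∧ ∀ (x₁ : X) (r R : ℝ), 0 < r → 0 < R →
        ∫⁻ x in {x | R ≤ d x₁ x},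
            (μ {z | d x₁ z < r} + μ {z | d x₁ z < d x₁ x})⁻¹ *
              ENNReal.ofReal ((r / (r + d x₁ x)) ^ γ) ∂μ ≤
          ENNReal.ofReal (C * (r / (r + R)) ^ γ') := by
  intro γ' hγ' hγ'γ hω
  have hs := mul_two_rpow_neg_lt_one (by linarith) hω
  refine ⟨1 + Cμ / (1 - Cμ * 2 ^ (-(γ - γ'))),
    add_pos one_pos (div_pos (by linarith) (sub_pos.2 hs)), fun x₁ r R hr hR => ?_⟩
  have hdm : Measurable (d x₁) := hd_meas.comp measurable_prodMk_left
  calc _ ≤ ∫⁻ x in {x | R ≤ d x₁ x}, ENNReal.ofReal ((r / (r + R)) ^ γ') *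
          ((μ {z | d x₁ z < r})⁻¹ * ENNReal.ofReal ((r / (r + d x₁ x)) ^ (γ - γ'))) ∂μ :=
        setLIntegral_mono' (hdm measurableSet_Ici) fun x hx =>
          inv_add_mul_ofReal_div_add_rpow_le _ _ hr hR.le hx hγ'.le
    _ ≤ ENNReal.ofReal ((r / (r + R)) ^ γ') * ∫⁻ x,
          (μ {z | d x₁ z < r})⁻¹ * ENNReal.ofReal ((r / (r + d x₁ x)) ^ (γ - γ')) ∂μ := by
        rw [lintegral_const_mul' _ _ ENNReal.ofReal_ne_top]
        exact mul_le_mul_right (setLIntegral_le_lintegral _ _) _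
    _ ≤ ENNReal.ofReal ((r / (r + R)) ^ γ') *
          ENNReal.ofReal (1 + Cμ / (1 - Cμ * 2 ^ (-(γ - γ')))) := by
        gcongr
        exact lintegral_inv_measure_ball_mul_rpow_le hd_nonneg (by linarith) (hdoub x₁) hdm hr
          (by linarith) hs
    _ = _ := by rw [← ENNReal.ofReal_mul (by positivity), mul_comm]

/-- On a doubling quasi-metric measure space with `μ(X) = ∞`, all
balls of positive finite measure, and `γ > 0`: for any `γ' ∈ (0,γ)` with
`γ - γ' > ω`, there is `C > 0` such that for all `x₁ ∈ X` and `r, R > 0`,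
`∫_{d(x₁,x) ≥ R} (V_r(x₁)+V(x₁,x))⁻¹ (r/(r+d(x₁,x)))^γ dμ(x) ≤ C (r/(r+R))^γ'`. -/
theorem integral_tail_kernel_bound {X : Type*} [MeasurableSpace X]
    (d : X → X → ℝ) (A₀ : ℝ) (hA₀ : 1 ≤ A₀)
    (hd_nonneg : ∀ x y, 0 ≤ d x y)
    (hd_symm : ∀ x y, d x y = d y x)
    (hd_eq : ∀ x y, d x y = 0 ↔ x = y)
    (hd_tri : ∀ x y z, d x z ≤ A₀ * (d x y + d y z))
    (hd_meas : Measurable fun p : X × X => d p.1 p.2)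
    (μ : Measure X) (Cμ : ℝ) (hCμ : 1 ≤ Cμ)
    (hdoub : ∀ x r, 0 < r →
      μ {y | d x y < 2 * r} ≤ ENNReal.ofReal Cμ * μ {y | d x y < r})
    (hball : ∀ (x : X) (r : ℝ), 0 < r →
      0 < μ {y | d x y < r} ∧ μ {y | d x y < r} < ⊤)
    (hinf : μ Set.univ = ⊤)
    (γ : ℝ) (hγ : 0 < γ) :
    ∀ γ' : ℝ, 0 < γ' → γ' < γ → Real.logb 2 Cμ < γ - γ' →
      ∃ C : ℝ, 0 < C ∧ ∀ (x₁ : X) (r R : ℝ), 0 < r → 0 < R →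
        ∫⁻ x in {x | R ≤ d x₁ x},
            (μ {z | d x₁ z < r} + μ {z | d x₁ z < d x₁ x})⁻¹ *
              ENNReal.ofReal ((r / (r + d x₁ x)) ^ γ) ∂μ ≤
          ENNReal.ofReal (C * (r / (r + R)) ^ γ') :=
  integral_tail_kernel_bound_general d hd_nonneg hd_meas μ Cμ hCμ hdoub γ
end

section
/- Let (X,d,μ) be a doubling quasi-metric measure space, δ ∈ (0,1), γ > 0, and θ ∈ (0,1] with θ > ω/(ω+γ) where ω is the upper dimension. Then for every k ∈ ℤ and x ∈ X, ∫_X [ (1/(V_{δ^k}(x)+V(x,y))) (δ^k/(δ^k+d(x,y)))^γ ]^θ dμ(y) ≤ C [V_{δ^k}(x)]^{1-θ}, with C independent of k and x. -/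
open MeasureTheory ENNReal

/-!
Cut `X` into the ball `B(x, r)` and the dyadic annuli `2ʲ r ≤ d(x,y) < 2ʲ⁺¹ r`. On the ball the
integrand is at most `V_r(x)^{-θ}`. On the `j`-th annulus it is at most `V_{2ʲr}(x)^{-θ} 2^{-jγθ}`,
while doubling bounds the annulus by `C_μ V_{2ʲr}(x)` and `V_{2ʲr}(x)` by `C_μʲ V_r(x)`, so the
annulus contributes `C_μ qʲ V_r(x)^{1-θ}` with `q = C_μ^{1-θ} 2^{-γθ} = 2^{ω(1-θ) - γθ}`;
and `q < 1` is exactly `θ > ω/(ω+γ)`.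
-/

open Set

namespace KernelRpow

variable {X : Type*} [MeasurableSpace X] {μ : Measure X} {ρ : X → ℝ} {r γ θ : ℝ}

/-- With `ρ = d x` this is `y ↦ [(V_r(x) + V(x,y))⁻¹ (r / (r + d(x,y)))^γ]^θ`. -/
noncomputable def kernel (μ : Measure X) (ρ : X → ℝ) (r γ θ : ℝ) (y : X) : ℝ≥0∞ :=
  ((μ {z | ρ z < r} + μ {z | ρ z < ρ y})⁻¹ * ENNReal.ofReal ((r / (r + ρ y)) ^ γ)) ^ θ

lemma measure_lt_two_pow_mul_le {C : ℝ≥0∞}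
    (hdoub : ∀ s, 0 < s → μ {y | ρ y < 2 * s} ≤ C * μ {y | ρ y < s}) (hr : 0 < r) (j : ℕ) :
    μ {y | ρ y < 2 ^ j * r} ≤ C ^ j * μ {y | ρ y < r} := by
  induction j with
  | zero => simp
  | succ j ih =>
    calc μ {y | ρ y < 2 ^ (j + 1) * r} = μ {y | ρ y < 2 * (2 ^ j * r)} := by ring_nf
      _ ≤ C * μ {y | ρ y < 2 ^ j * r} := hdoub _ (by positivity)
      _ ≤ C * (C ^ j * μ {y | ρ y < r}) := by gcongr
      _ = C ^ (j + 1) * μ {y | ρ y < r} := by ring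

lemma lintegral_le_add_tsum_annuli (hr : 0 < r) (f : X → ℝ≥0∞) {a : ℝ≥0∞} {b : ℕ → ℝ≥0∞}
    (h₀ : ∫⁻ y in {y | ρ y < r}, f y ∂μ ≤ a)
    (h : ∀ j : ℕ, ∫⁻ y in {y | ρ y < 2 ^ (j + 1) * r} \ {y | ρ y < 2 ^ j * r}, f y ∂μ ≤ b j) :
    ∫⁻ y, f y ∂μ ≤ a + ∑' j, b j := by
  set s : ℕ → Set X := fun n => {y | ρ y < 2 ^ n * r}
  have hs : Monotone s := fun m n hmn y (hy : ρ y < 2 ^ m * r) =>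
    hy.trans_le (by gcongr; norm_num)
  have hcover : ⋃ n, s n = univ := by
    refine eq_univ_of_forall fun y => mem_iUnion.2 ?_
    obtain ⟨n, hn⟩ := pow_unbounded_of_one_lt (ρ y / r) one_lt_two
    exact ⟨n, (div_lt_iff₀ hr).1 hn⟩
  calc ∫⁻ y, f y ∂μ = ∫⁻ y in ⋃ n, disjointed s n, f y ∂μ := by
        rw [iUnion_disjointed, hcover, Measure.restrict_univ]
    _ ≤ ∑' n, ∫⁻ y in disjointed s n, f y ∂μ := lintegral_iUnion_le _ _
    _ = ∫⁻ y in s 0, f y ∂μ + ∑' j, ∫⁻ y in s (j + 1) \ s j, f y ∂μ := by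
        rw [tsum_eq_zero_add' ENNReal.summable, disjointed_zero]
        congr! with j
        rw [← Order.succ_eq_add_one, hs.disjointed_succ (not_isMax j)]
    _ ≤ a + ∑' j, b j := add_le_add (by simpa [s] using h₀) (ENNReal.tsum_le_tsum h)

lemma rpow_neg_mul_self_le_rpow_one_sub (a : ℝ≥0∞) (hθ : 0 ≤ θ) :
    a ^ (-θ) * a ≤ a ^ (1 - θ) := by
  rcases eq_or_ne a 0 with rfl | ha₀
  · simp
  rcases eq_or_ne a ⊤ with rfl | ha
  · rcases hθ.eq_or_lt with rfl | hθ
    · simp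
    · simp [ENNReal.top_rpow_of_neg (neg_neg_of_pos hθ)]
  · rw [sub_eq_neg_add, ENNReal.rpow_add _ _ ha₀ ha, ENNReal.rpow_one]

lemma kernel_le_rpow_neg (hρ : ∀ y, 0 ≤ ρ y) (hr : 0 < r) (hγ : 0 ≤ γ) (hθ : 0 ≤ θ) (y : X) :
    kernel μ ρ r γ θ y ≤ μ {z | ρ z < r} ^ (-θ) := by
  have hdecay : ENNReal.ofReal ((r / (r + ρ y)) ^ γ) ≤ 1 :=
    ENNReal.ofReal_le_one.2 <| Real.rpow_le_one (by have := hρ y; positivity)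
      (div_le_one_of_le₀ (by linarith [hρ y]) (by linarith [hρ y])) hγ
  calc kernel μ ρ r γ θ y ≤ ((μ {z | ρ z < r})⁻¹ * 1) ^ θ := by
        unfold kernel; gcongr; exact le_self_add
    _ = μ {z | ρ z < r} ^ (-θ) := by rw [mul_one, ENNReal.inv_rpow, ENNReal.rpow_neg]

lemma kernel_le_of_two_pow_mul_le (hr : 0 < r) (hγ : 0 ≤ γ) (hθ : 0 ≤ θ) {j : ℕ} {y : X}
    (hy : 2 ^ j * r ≤ ρ y) :
    kernel μ ρ r γ θ y ≤ μ {z | ρ z < 2 ^ j * r} ^ (-θ) * (2 ^ (-(γ * θ))) ^ j := by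
  have hρy : 0 < ρ y := (by positivity : (0 : ℝ) < 2 ^ j * r).trans_le hy
  have hdecay : (r / (r + ρ y)) ^ γ ≤ ((2 : ℝ) ^ (-γ)) ^ j := by
    have hratio : r / (r + ρ y) ≤ ((2 : ℝ) ^ j)⁻¹ := by
      rw [div_le_iff₀ (by positivity), inv_mul_eq_div, le_div_iff₀ (by positivity)]
      linarith
    calc (r / (r + ρ y)) ^ γ ≤ (((2 : ℝ) ^ j)⁻¹) ^ γ := by gcongr
      _ = ((2 : ℝ) ^ (-γ)) ^ j := by
        rw [Real.inv_rpow (by positivity), ← Real.rpow_pow_comm zero_le_two,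
          Real.rpow_neg zero_le_two, inv_pow]
  have hball : μ {z | ρ z < 2 ^ j * r} ≤ μ {z | ρ z < ρ y} :=
    measure_mono fun z (hz : ρ z < 2 ^ j * r) => hz.trans_le hy
  calc kernel μ ρ r γ θ y
      ≤ ((μ {z | ρ z < 2 ^ j * r})⁻¹ * ENNReal.ofReal (((2 : ℝ) ^ (-γ)) ^ j)) ^ θ := by
        unfold kernel; gcongr; exact hball.trans le_add_self
    _ = μ {z | ρ z < 2 ^ j * r} ^ (-θ) * (2 ^ (-(γ * θ))) ^ j := by
        rw [ENNReal.mul_rpow_of_nonneg _ _ hθ, ENNReal.inv_rpow, ← ENNReal.rpow_neg,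
          ENNReal.ofReal_pow (by positivity), ← ENNReal.ofReal_rpow_of_pos zero_lt_two,
          ENNReal.ofReal_ofNat, ← ENNReal.rpow_natCast, ← ENNReal.rpow_mul, ← ENNReal.rpow_mul,
          ← ENNReal.rpow_mul_natCast]
        ring_nf

lemma setLIntegral_kernel_ball_le (hρ : ∀ y, 0 ≤ ρ y) (hr : 0 < r) (hγ : 0 ≤ γ) (hθ : 0 ≤ θ) :
    ∫⁻ y in {y | ρ y < r}, kernel μ ρ r γ θ y ∂μ ≤ μ {y | ρ y < r} ^ (1 - θ) :=
  calc ∫⁻ y in {y | ρ y < r}, kernel μ ρ r γ θ y ∂μ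
      ≤ ∫⁻ _ in {y | ρ y < r}, μ {z | ρ z < r} ^ (-θ) ∂μ :=
        setLIntegral_mono measurable_const fun y _ => kernel_le_rpow_neg hρ hr hγ hθ y
    _ = μ {z | ρ z < r} ^ (-θ) * μ {y | ρ y < r} := setLIntegral_const _ _
    _ ≤ μ {y | ρ y < r} ^ (1 - θ) := rpow_neg_mul_self_le_rpow_one_sub _ hθ

lemma setLIntegral_kernel_annulus_le {C : ℝ≥0∞}
    (hdoub : ∀ s, 0 < s → μ {y | ρ y < 2 * s} ≤ C * μ {y | ρ y < s}) (hr : 0 < r)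
    (hγ : 0 ≤ γ) (hθ₀ : 0 ≤ θ) (hθ₁ : θ ≤ 1) (j : ℕ) :
    ∫⁻ y in {y | ρ y < 2 ^ (j + 1) * r} \ {y | ρ y < 2 ^ j * r}, kernel μ ρ r γ θ y ∂μ ≤
      C * (C ^ (1 - θ) * 2 ^ (-(γ * θ))) ^ j * μ {y | ρ y < r} ^ (1 - θ) := by
  set W := μ {y | ρ y < 2 ^ j * r}
  set a : ℝ≥0∞ := 2 ^ (-(γ * θ))
  have hannulus : μ ({y | ρ y < 2 ^ (j + 1) * r} \ {y | ρ y < 2 ^ j * r}) ≤ C * W :=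
    calc _ ≤ μ {y | ρ y < 2 * (2 ^ j * r)} := measure_mono fun y hy => by
          show ρ y < 2 * (2 ^ j * r)
          rw [← mul_assoc, ← pow_succ']; exact hy.1
      _ ≤ C * W := hdoub _ (by positivity)
  calc ∫⁻ y in {y | ρ y < 2 ^ (j + 1) * r} \ {y | ρ y < 2 ^ j * r}, kernel μ ρ r γ θ y ∂μ
      ≤ ∫⁻ _ in {y | ρ y < 2 ^ (j + 1) * r} \ {y | ρ y < 2 ^ j * r}, W ^ (-θ) * a ^ j ∂μ :=
        setLIntegral_mono measurable_const fun y hy =>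
          kernel_le_of_two_pow_mul_le hr hγ hθ₀ (not_lt.1 hy.2)
    _ = W ^ (-θ) * a ^ j * μ ({y | ρ y < 2 ^ (j + 1) * r} \ {y | ρ y < 2 ^ j * r}) :=
        setLIntegral_const _ _
    _ ≤ W ^ (-θ) * a ^ j * (C * W) := by gcongr
    _ = C * a ^ j * (W ^ (-θ) * W) := by ring
    _ ≤ C * a ^ j * W ^ (1 - θ) := by gcongr; exact rpow_neg_mul_self_le_rpow_one_sub W hθ₀
    _ ≤ C * a ^ j * (C ^ j * μ {y | ρ y < r}) ^ (1 - θ) := by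
        gcongr; exact measure_lt_two_pow_mul_le hdoub hr j
    _ = C * (C ^ (1 - θ) * a) ^ j * μ {y | ρ y < r} ^ (1 - θ) := by
        have hcomm : (C ^ j) ^ (1 - θ) = (C ^ (1 - θ)) ^ j := by
          rw [← ENNReal.rpow_natCast, ← ENNReal.rpow_mul, mul_comm, ENNReal.rpow_mul_natCast]
        rw [ENNReal.mul_rpow_of_nonneg _ _ (by linarith), hcomm, mul_pow]
        ring

theorem lintegral_kernel_le {C : ℝ≥0∞} (hρ : ∀ y, 0 ≤ ρ y)
    (hdoub : ∀ s, 0 < s → μ {y | ρ y < 2 * s} ≤ C * μ {y | ρ y < s}) (hr : 0 < r)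
    (hγ : 0 ≤ γ) (hθ₀ : 0 ≤ θ) (hθ₁ : θ ≤ 1) :
    ∫⁻ y, kernel μ ρ r γ θ y ∂μ ≤
      (1 + C * (1 - C ^ (1 - θ) * 2 ^ (-(γ * θ)))⁻¹) * μ {y | ρ y < r} ^ (1 - θ) :=
  calc ∫⁻ y, kernel μ ρ r γ θ y ∂μ
      ≤ μ {y | ρ y < r} ^ (1 - θ) +
          ∑' j, C * (C ^ (1 - θ) * 2 ^ (-(γ * θ))) ^ j * μ {y | ρ y < r} ^ (1 - θ) :=
        lintegral_le_add_tsum_annuli hr _ (setLIntegral_kernel_ball_le hρ hr hγ hθ₀)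
          (setLIntegral_kernel_annulus_le hdoub hr hγ hθ₀ hθ₁)
    _ = _ := by rw [ENNReal.tsum_mul_right, ENNReal.tsum_mul_left, ENNReal.tsum_geometric]; ring

lemma ofReal_rpow_one_sub_mul_two_rpow_neg_lt_one {C γ θ : ℝ} (hC : 1 ≤ C) (hγ : 0 < γ)
    (hθ : Real.logb 2 C / (Real.logb 2 C + γ) < θ) :
    ENNReal.ofReal C ^ (1 - θ) * 2 ^ (-(γ * θ)) < 1 := by
  have hC₀ : 0 < C := zero_lt_one.trans_le hC
  have hω : 0 ≤ Real.logb 2 C := Real.logb_nonneg one_lt_two hC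
  have hexp : Real.logb 2 C * (1 - θ) + -(γ * θ) < 0 := by
    have := (div_lt_iff₀ (by linarith)).1 hθ
    linarith
  rw [ENNReal.ofReal_rpow_of_pos hC₀, ← ENNReal.ofReal_ofNat 2, ENNReal.ofReal_rpow_of_pos two_pos,
    ← ENNReal.ofReal_mul (by positivity), ENNReal.ofReal_lt_one, ← Real.rpow_logb two_pos
    (by norm_num) hC₀, ← Real.rpow_mul zero_le_two, ← Real.rpow_add two_pos]
  exact Real.rpow_lt_one_of_one_lt_of_neg one_lt_two hexp

end KernelRpow

theorem kernel_rpow_integral_bound_general {X : Type*} [MeasurableSpace X]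
    (d : X → X → ℝ)
    (hd_nonneg : ∀ x y, 0 ≤ d x y)
    (μ : Measure X) (Cμ : ℝ) (hCμ : 1 ≤ Cμ)
    (hdoub : ∀ x r, 0 < r →
      μ {y | d x y < 2 * r} ≤ ENNReal.ofReal Cμ * μ {y | d x y < r})
    (δ : ℝ) (hδ0 : 0 < δ)
    (γ θ : ℝ) (hγ : 0 < γ) (hθ0 : 0 < θ) (hθ1 : θ ≤ 1)
    (hθ : Real.logb 2 Cμ / (Real.logb 2 Cμ + γ) < θ) :
    ∃ C : ℝ, 0 < C ∧ ∀ (k : ℤ) (x : X),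
      ∫⁻ y, ((μ {z | d x z < δ ^ k} + μ {z | d x z < d x y})⁻¹ *
          ENNReal.ofReal ((δ ^ k / (δ ^ k + d x y)) ^ γ)) ^ θ ∂μ ≤
        ENNReal.ofReal C * (μ {z | d x z < δ ^ k}) ^ (1 - θ) := by
  set q : ℝ≥0∞ := ENNReal.ofReal Cμ ^ (1 - θ) * 2 ^ (-(γ * θ))
  have hq : q < 1 := KernelRpow.ofReal_rpow_one_sub_mul_two_rpow_neg_lt_one hCμ hγ hθ
  set K : ℝ≥0∞ := 1 + ENNReal.ofReal Cμ * (1 - q)⁻¹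
  have hK : K ≠ ⊤ := by
    simp [K, ENNReal.mul_eq_top, ENNReal.inv_eq_top, tsub_eq_zero_iff_le, hq.not_ge]
  refine ⟨K.toReal, ENNReal.toReal_pos (by simp [K]) hK, fun k x => ?_⟩
  rw [ENNReal.ofReal_toReal hK]
  exact KernelRpow.lintegral_kernel_le (hd_nonneg x) (hdoub x) (zpow_pos hδ0 k) hγ.le hθ0.le hθ1

/-- On a doubling quasi-metric measure space with upper dimension
`ω = log₂ Cμ` and `μ(X) = ∞`: for `δ ∈ (0,1)`, `γ > 0`, and
`θ ∈ (ω/(ω+γ), 1]`, one has, uniformly in `k ∈ ℤ` and `x ∈ X`,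
`∫_X [ (V_{δᵏ}(x)+V(x,y))⁻¹ (δᵏ/(δᵏ+d(x,y)))^γ ]^θ dμ(y) ≤ C ⬝ V_{δᵏ}(x)^{1-θ}`. -/
theorem kernel_rpow_integral_bound {X : Type*} [MeasurableSpace X]
    (d : X → X → ℝ) (A₀ : ℝ) (hA₀ : 1 ≤ A₀)
    (hd_nonneg : ∀ x y, 0 ≤ d x y)
    (hd_symm : ∀ x y, d x y = d y x)
    (hd_eq : ∀ x y, d x y = 0 ↔ x = y)
    (hd_tri : ∀ x y z, d x z ≤ A₀ * (d x y + d y z))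
    (hd_meas : Measurable fun p : X × X => d p.1 p.2)
    (μ : Measure X) (Cμ : ℝ) (hCμ : 1 ≤ Cμ)
    (hdoub : ∀ x r, 0 < r →
      μ {y | d x y < 2 * r} ≤ ENNReal.ofReal Cμ * μ {y | d x y < r})
    (hball : ∀ (x : X) (r : ℝ), 0 < r →
      0 < μ {y | d x y < r} ∧ μ {y | d x y < r} < ⊤)
    (hinf : μ Set.univ = ⊤)
    (δ : ℝ) (hδ0 : 0 < δ) (hδ1 : δ < 1)
    (γ θ : ℝ) (hγ : 0 < γ) (hθ0 : 0 < θ) (hθ1 : θ ≤ 1)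
    (hθ : Real.logb 2 Cμ / (Real.logb 2 Cμ + γ) < θ) :
    ∃ C : ℝ, 0 < C ∧ ∀ (k : ℤ) (x : X),
      ∫⁻ y, ((μ {z | d x z < δ ^ k} + μ {z | d x z < d x y})⁻¹ *
          ENNReal.ofReal ((δ ^ k / (δ ^ k + d x y)) ^ γ)) ^ θ ∂μ ≤
        ENNReal.ofReal C * (μ {z | d x z < δ ^ k}) ^ (1 - θ) :=
  kernel_rpow_integral_bound_general d hd_nonneg μ Cμ hCμ hdoub δ hδ0 γ θ hγ hθ0 hθ1 hθ
end
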